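/- arXiv:2411.06056 — 3 statements merged into one kernel-verified Lean document; each statement's English description precedes it below -/
import Mathlib

section
/- Let X ∼ N(0, I_d) and u ∈ ℝ^d nonzero. Then the matrix M(u) = E[ X Xᵀ · e^{Xᵀu}/(1+e^{Xᵀu})² ] is symmetric positive semidefinite and, after rotation by any orthogonal matrix R with R u = ‖u‖₂ e₁, is diagonal with exactly two distinct diagonal values: λ₁ = E[ g₁² e^{‖u‖ g₁}/(1+e^{‖u‖ g₁})² ] (in the direction of u) and λ₂ = E[ e^{‖u‖ g₁}/(1+e^{‖u‖ g₁})² ] (repeated d-1 times, orthogonal to u), where g₁ ∼ N(0,1). -/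
open MeasureTheory ProbabilityTheory Matrix
open Real Filter
open scoped ENNReal NNReal


noncomputable def ν : Measure ℝ := gaussianReal 0 1

lemma pdf_eq (x : ℝ) : gaussianPDFReal 0 1 x = (Real.sqrt (2*π))⁻¹ * Real.exp (-(x^2)/2) := by
  simp [gaussianPDFReal]

lemma nu_int (g : ℝ → ℝ) :
    ∫ x, g x ∂ν = ∫ x, gaussianPDFReal 0 1 x * g x := by
  rw [ν, gaussianReal_of_var_ne_zero 0 one_ne_zero]
  unfold gaussianPDF
  rw [show (fun x => ENNReal.ofReal (gaussianPDFReal 0 1 x))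
      = fun x => ((gaussianPDFReal 0 1 x).toNNReal : ℝ≥0∞) from rfl,
    integral_withDensity_eq_integral_smul ((measurable_gaussianPDFReal 0 1).real_toNNReal) g]
  congr 1; ext x
  rw [NNReal.smul_def, smul_eq_mul, Real.coe_toNNReal _ (gaussianPDFReal_nonneg 0 1 x)]

lemma nu_integrable_iff (g : ℝ → ℝ) :
    Integrable g ν ↔ Integrable (fun x => gaussianPDFReal 0 1 x * g x) := by
  rw [ν, gaussianReal_of_var_ne_zero 0 one_ne_zero]
  unfold gaussianPDF
  rw [show (fun x => ENNReal.ofReal (gaussianPDFReal 0 1 x))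
      = fun x => ((gaussianPDFReal 0 1 x).toNNReal : ℝ≥0∞) from rfl,
    integrable_withDensity_iff_integrable_smul ((measurable_gaussianPDFReal 0 1).real_toNNReal)]
  constructor <;> intro h <;> refine h.congr (Eventually.of_forall fun x => ?_) <;>
    simp [NNReal.smul_def, Real.coe_toNNReal _ (gaussianPDFReal_nonneg 0 1 x)]

noncomputable def gex (x : ℝ) : ℝ := Real.exp (-(x^2)/2)

lemma hIe : Integrable gex := by
  have h := integrable_exp_neg_mul_sq (b := (1/2:ℝ)) (by norm_num)
  refine h.congr (Eventually.of_forall fun x => ?_)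
  unfold gex; ring_nf

lemma hIxe : Integrable (fun x => x * gex x) := by
  have h := integrable_mul_exp_neg_mul_sq (b := (1/2:ℝ)) (by norm_num)
  refine h.congr (Eventually.of_forall fun x => ?_)
  unfold gex; ring_nf

lemma hIx2e : Integrable (fun x => x^2 * gex x) := by
  have h := integrable_rpow_mul_exp_neg_mul_sq (b := (1/2:ℝ)) (by norm_num) (s := (2:ℝ)) (by norm_num)
  refine h.congr (Eventually.of_forall fun x => ?_)
  show x ^ (2:ℝ) * Real.exp (-(1/2) * x^2) = x ^ 2 * gex x
  rw [show ((2:ℝ)) = ((2:ℕ):ℝ) by norm_num, Real.rpow_natCast]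
  unfold gex; ring_nf

lemma hD (x : ℝ) : HasDerivAt (fun y => -gex y) (x * gex x) x := by
  have h1 : HasDerivAt (fun y : ℝ => -(y^2)/2) (-x) x := by
    have := (((hasDerivAt_pow 2 x)).neg).div_const 2
    exact this.congr_deriv (by norm_num; ring)
  have := (h1.exp).neg
  exact this.congr_deriv (by unfold gex; ring)

lemma int_e : ∫ x, gex x = Real.sqrt (2*π) := by
  have h := integral_gaussian (1/2)
  rw [show (fun x : ℝ => Real.exp (-(1/2) * x^2)) = gex by funext x; unfold gex; ring_nf] at h
  rw [h]; congr 1; ring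

lemma int_xe : ∫ x, x * gex x = 0 :=
  integral_eq_zero_of_hasDerivAt_of_integrable hD hIxe hIe.neg

lemma int_x2e : ∫ x, x^2 * gex x = Real.sqrt (2*π) := by
  have huv' : Integrable ((fun x : ℝ => x) * fun x => x * gex x) :=
    hIx2e.congr (Eventually.of_forall fun x => by show x ^ 2 * gex x = x * (x * gex x); ring)
  have hu'v : Integrable ((fun _ : ℝ => (1:ℝ)) * fun x => -gex x) :=
    hIe.neg.congr (Eventually.of_forall fun x => by show -gex x = 1 * -gex x; ring)
  have huv : Integrable ((fun x : ℝ => x) * fun x => -gex x) :=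
    hIxe.neg.congr (Eventually.of_forall fun x => by show -(x * gex x) = x * -gex x; ring)
  have h := integral_mul_deriv_eq_deriv_mul_of_integrable
    (u := fun x : ℝ => x) (u' := fun _ => (1:ℝ)) (v := fun x => -gex x)
    (v' := fun x => x * gex x) (fun x _ => hasDerivAt_id' x) (fun x _ => hD x) huv' hu'v huv
  have h2 : ∫ x, x * (x * gex x) = ∫ x, x^2 * gex x := by
    congr 1; funext x; ring
  rw [h2] at h
  rw [h, ← int_e]
  rw [show ∫ x, (1:ℝ) * -gex x = -∫ x, gex x by
    rw [← integral_neg]; congr 1; funext x; ring]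
  ring

lemma sqrt2pi_pos : 0 < Real.sqrt (2*π) := Real.sqrt_pos.2 (by positivity)

lemma pdf_mul (g : ℝ → ℝ) (x : ℝ) :
    gaussianPDFReal 0 1 x * g x = (Real.sqrt (2*π))⁻¹ * (g x * gex x) := by
  rw [pdf_eq]; unfold gex; ring

instance : IsProbabilityMeasure ν := by unfold ν; infer_instance

lemma nu_int' (g : ℝ → ℝ) :
    ∫ x, g x ∂ν = (Real.sqrt (2*π))⁻¹ * ∫ x, g x * gex x := by
  rw [nu_int, ← integral_const_mul]; congr 1; funext x; exact pdf_mul g x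

lemma nu_integrable (g : ℝ → ℝ) (h : Integrable (fun x => g x * gex x)) :
    Integrable g ν := by
  rw [nu_integrable_iff]
  refine (h.const_mul ((Real.sqrt (2*π))⁻¹)).congr (Eventually.of_forall fun x => ?_)
  exact (pdf_mul g x).symm

lemma nu_mean : ∫ x, x ∂ν = 0 := by
  rw [nu_int' (fun x => x), int_xe, mul_zero]

lemma nu_var : ∫ x, x^2 ∂ν = 1 := by
  rw [nu_int' (fun x => x^2), int_x2e, inv_mul_cancel₀ sqrt2pi_pos.ne']

lemma nu_integrable_id : Integrable (fun x => x) ν := nu_integrable _ hIxe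

lemma nu_integrable_sq : Integrable (fun x => x^2) ν := nu_integrable _ hIx2e

/-- the logistic weight -/
noncomputable def lw (t : ℝ) : ℝ := Real.exp t / (1 + Real.exp t)^2

lemma lw_nonneg (t : ℝ) : 0 ≤ lw t := by
  unfold lw; positivity

lemma lw_le_one (t : ℝ) : lw t ≤ 1 := by
  unfold lw
  rw [div_le_one (by positivity)]
  nlinarith [Real.exp_pos t, sq_nonneg (Real.exp t)]

lemma lw_cont : Continuous lw :=
  Real.continuous_exp.div ((continuous_const.add Real.continuous_exp).pow 2)
    (fun t => by positivity)

lemma lw_abs (t : ℝ) : |lw t| ≤ 1 := by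
  rw [abs_of_nonneg (lw_nonneg t)]; exact lw_le_one t

lemma nu_integrable_lw (a : ℝ) : Integrable (fun g => lw (a * g)) ν := by
  refine (integrable_const (1:ℝ)).mono' ?_ (Eventually.of_forall fun x => ?_)
  · exact ((lw_cont.comp (continuous_const.mul continuous_id)).aestronglyMeasurable)
  · simpa using lw_abs (a * x)

lemma nu_integrable_sq_lw (a : ℝ) : Integrable (fun g => g^2 * lw (a * g)) ν := by
  refine nu_integrable_sq.mono' ?_ (Eventually.of_forall fun x => ?_)
  · exact ((continuous_pow 2).mul
      (lw_cont.comp (continuous_const.mul continuous_id))).aestronglyMeasurable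
  · rw [norm_eq_abs, abs_mul, abs_of_nonneg (sq_nonneg x)]
    calc x^2 * |lw (a*x)| ≤ x^2 * 1 := by
          exact mul_le_mul_of_nonneg_left (lw_abs _) (sq_nonneg x)
      _ = x^2 := mul_one _

lemma nu_int_mul_lw (a : ℝ) : ∫ x, x * lw (a * x) ∂ν = 0 → True := fun _ => trivial

lemma pi_prod_int {d : ℕ} (f : Fin d → ℝ → ℝ) :
    ∫ x, ∏ i, f i (x i) ∂(Measure.pi fun _ : Fin d => ν) = ∏ i, ∫ t, f i t ∂ν := by
  letI : MeasureSpace ℝ := ⟨ν⟩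
  haveI : SigmaFinite (volume : Measure ℝ) := inferInstanceAs (SigmaFinite ν)
  exact integral_fin_nat_prod_eq_prod f

lemma pi_prod_integrable {d : ℕ} (f : Fin d → ℝ → ℝ) (hf : ∀ i, Integrable (f i) ν) :
    Integrable (fun x => ∏ i, f i (x i)) (Measure.pi fun _ : Fin d => ν) := by
  letI : MeasureSpace ℝ := ⟨ν⟩
  haveI : SigmaFinite (volume : Measure ℝ) := inferInstanceAs (SigmaFinite ν)
  exact Integrable.fin_nat_prod hf

lemma lintegral_pi_prod {n : ℕ} (f : Fin n → ℝ → ℝ≥0∞) (hf : ∀ i, Measurable (f i)) :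
    ∫⁻ x : Fin n → ℝ, ∏ i, f i (x i) = ∏ i, ∫⁻ t, f i t := by
  induction n with
  | zero => simp [volume_pi, lintegral_const, Measure.pi_empty_univ]
  | succ n ih =>
    have A := ((measurePreserving_piFinSuccAbove (fun _ : Fin (n+1) => (volume : Measure ℝ)) 0).symm)
    rw [volume_pi, ← A.lintegral_comp_emb (MeasurableEquiv.measurableEmbedding _)]
    simp_rw [MeasurableEquiv.piFinSuccAbove_symm_apply, Fin.insertNthEquiv,
      Fin.prod_univ_succ, Fin.insertNth_zero]
    simp only [Fin.zero_succAbove, cast_eq, Equiv.coe_fn_mk, Function.comp_def, Fin.cons_zero, Fin.cons_succ]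
    have key : ∫⁻ z : ℝ × (Fin n → ℝ), f 0 z.1 * ∏ i : Fin n, f i.succ (z.2 i)
        ∂((volume : Measure ℝ).prod (Measure.pi fun _ : Fin n => (volume : Measure ℝ)))
        = (∫⁻ t, f 0 t) * ∫⁻ x : Fin n → ℝ, ∏ i : Fin n, f i.succ (x i) := by
      exact lintegral_prod_mul ((hf 0).aemeasurable)
        (Finset.measurable_prod _ (fun (i : Fin n) _ => ((hf i.succ).comp (measurable_pi_apply i)))).aemeasurable
    rw [key]
    rw [ih (fun i => f i.succ) (fun i => hf i.succ)]

lemma pi_gauss_withDensity {d : ℕ} : Measure.pi (fun _ : Fin d => ν) =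
    (volume : Measure (Fin d → ℝ)).withDensity
      (fun x => ∏ i, ENNReal.ofReal (gaussianPDFReal 0 1 (x i))) := by
  refine (Measure.pi_eq fun s hs => ?_).symm.symm
  rw [withDensity_apply _ (MeasurableSet.univ_pi hs)]
  rw [← lintegral_indicator (MeasurableSet.univ_pi hs)]
  have hind : ∀ x : Fin d → ℝ,
      (Set.univ.pi s).indicator (fun x => ∏ i, ENNReal.ofReal (gaussianPDFReal 0 1 (x i))) x
      = ∏ i, (s i).indicator (fun t => ENNReal.ofReal (gaussianPDFReal 0 1 t)) (x i) := by
    intro x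
    by_cases hx : x ∈ Set.univ.pi s
    · rw [Set.indicator_of_mem hx]
      refine Finset.prod_congr rfl fun i _ => ?_
      rw [Set.indicator_of_mem (hx i (Set.mem_univ i))]
    · rw [Set.indicator_of_notMem hx]
      rw [Set.mem_pi] at hx
      push_neg at hx
      obtain ⟨i, -, hi⟩ := hx
      exact (Finset.prod_eq_zero (Finset.mem_univ i)
        (by rw [Set.indicator_of_notMem hi])).symm
  simp_rw [hind]
  rw [lintegral_pi_prod _ (fun i => ((measurable_gaussianPDFReal 0 1).ennreal_ofReal).indicator (hs i))]
  refine Finset.prod_congr rfl fun i _ => ?_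
  rw [lintegral_indicator (hs i), ν, gaussianReal_of_var_ne_zero 0 one_ne_zero,
    withDensity_apply _ (hs i)]
  rfl

open Matrix in
lemma rot_sq_sum {d : ℕ} (R : Matrix (Fin d) (Fin d) ℝ) (hR : R * Rᵀ = 1) (y : Fin d → ℝ) :
    ∑ i, ((Rᵀ.mulVec y) i)^2 = ∑ i, (y i)^2 := by
  have h1 : ∑ i, ((Rᵀ.mulVec y) i)^2 = (Rᵀ.mulVec y) ⬝ᵥ (Rᵀ.mulVec y) := by
    simp [dotProduct, sq]
  have h2 : y ⬝ᵥ (R.mulVec (Rᵀ.mulVec y)) = (y ᵥ* R) ⬝ᵥ (Rᵀ.mulVec y) :=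
    dotProduct_mulVec y R _
  rw [h1]
  nth_rewrite 1 [Matrix.mulVec_transpose]
  rw [← h2, Matrix.mulVec_mulVec, hR, Matrix.one_mulVec]
  simp [dotProduct, sq]

open Matrix in
noncomputable def rotEquiv {d : ℕ} (R : Matrix (Fin d) (Fin d) ℝ)
    (hR : R * Rᵀ = 1) (hR' : Rᵀ * R = 1) : (Fin d → ℝ) ≃ᵐ (Fin d → ℝ) := by
  have hc : ∀ A : Matrix (Fin d) (Fin d) ℝ, Continuous fun x : Fin d → ℝ => A.mulVec x := by
    intro A
    refine continuous_pi fun i => ?_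
    simp only [Matrix.mulVec, dotProduct]
    exact continuous_finset_sum _ fun j _ => continuous_const.mul (continuous_apply j)
  exact Homeomorph.toMeasurableEquiv
    { toFun := R.mulVec
      invFun := Rᵀ.mulVec
      left_inv := fun x => by rw [Matrix.mulVec_mulVec, hR', Matrix.one_mulVec]
      right_inv := fun x => by rw [Matrix.mulVec_mulVec, hR, Matrix.one_mulVec]
      continuous_toFun := hc R
      continuous_invFun := hc Rᵀ }

open Matrix in
lemma map_rot_vol {d : ℕ} (R : Matrix (Fin d) (Fin d) ℝ) (hR : R * Rᵀ = 1) :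
    Measure.map (fun x => R.mulVec x) (volume : Measure (Fin d → ℝ)) = volume := by
  have h2 : R.det * R.det = 1 := by
    have := congrArg Matrix.det hR
    rwa [Matrix.det_mul, Matrix.det_transpose, Matrix.det_one] at this
  have habs : |R.det| = 1 := by
    rcases mul_self_eq_one_iff.1 h2 with h | h <;> rw [h] <;> norm_num
  have hdet : LinearMap.det (Matrix.toLin' R) = R.det := LinearMap.det_toLin' R
  have hne : LinearMap.det (Matrix.toLin' R) ≠ 0 := by
    rw [hdet]; intro h; rw [h] at habs; norm_num at habs
  have := Real.map_linearMap_volume_pi_eq_smul_volume_pi hne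
  rw [hdet, abs_inv, habs, inv_one, ENNReal.ofReal_one, one_smul] at this
  have hfun : (fun x : Fin d → ℝ => R.mulVec x) = ⇑(Matrix.toLin' R) := by
    funext x; exact (Matrix.toLin'_apply R x).symm
  rw [hfun]; exact this

open Matrix in
lemma map_rot_gauss {d : ℕ} (R : Matrix (Fin d) (Fin d) ℝ)
    (hR : R * Rᵀ = 1) (hR' : Rᵀ * R = 1) :
    Measure.map (fun x => R.mulVec x) (Measure.pi fun _ : Fin d => ν)
      = Measure.pi fun _ : Fin d => ν := by
  set D : (Fin d → ℝ) → ℝ≥0∞ := fun x => ∏ i, ENNReal.ofReal (gaussianPDFReal 0 1 (x i))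
    with hDdef
  have hDmeas : Measurable D := Finset.measurable_prod _ fun i _ =>
    ((measurable_gaussianPDFReal 0 1).comp (measurable_pi_apply i)).ennreal_ofReal
  have hprod : ∀ t : Fin d → ℝ, ∏ i, gaussianPDFReal 0 1 (t i)
      = (Real.sqrt (2*π))⁻¹^d * Real.exp (-(∑ i, t i^2)/2) := by
    intro t
    simp_rw [pdf_eq]
    rw [Finset.prod_mul_distrib, Finset.prod_const, Finset.card_univ, Fintype.card_fin,
      ← Real.exp_sum]
    congr 2
    rw [← Finset.sum_div, ← Finset.sum_neg_distrib]
  have hDrot : ∀ y, D (Rᵀ.mulVec y) = D y := by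
    intro y
    simp only [hDdef]
    rw [← ENNReal.ofReal_prod_of_nonneg (fun i _ => gaussianPDFReal_nonneg 0 1 _),
        ← ENNReal.ofReal_prod_of_nonneg (fun i _ => gaussianPDFReal_nonneg 0 1 _),
        hprod, hprod, rot_sq_sum R hR y]
  have hmap : Measure.map (fun x => R.mulVec x)
      ((volume : Measure (Fin d → ℝ)).withDensity D) = volume.withDensity D := by
    set e := rotEquiv R hR hR' with he
    have hcoe : (fun x : Fin d → ℝ => R.mulVec x) = ⇑e := rfl
    have hvol := map_rot_vol R hR
    rw [hcoe] at hvol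
    ext s hs
    rw [hcoe, MeasurableEquiv.map_apply, withDensity_apply _ (e.measurable hs),
      withDensity_apply _ hs]
    have h1 : ∫⁻ y in s, D (e.symm y) ∂(Measure.map (⇑e) volume)
        = ∫⁻ x in ⇑e ⁻¹' s, D (e.symm (e x)) ∂volume :=
      setLIntegral_map hs (hDmeas.comp e.symm.measurable) e.measurable
    simp only [e.symm_apply_apply] at h1
    rw [hvol] at h1
    rw [← h1]
    refine setLIntegral_congr_fun hs (fun y _ => ?_)
    exact hDrot y
  rw [pi_gauss_withDensity]
  exact hmap

noncomputable abbrev μd (d : ℕ) : Measure (Fin d → ℝ) := Measure.pi fun _ : Fin d => ν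

lemma quad_form {d : ℕ} (u : Fin d → ℝ) (c e : Fin d → ℝ)
    (hint : ∀ k l : Fin d,
      Integrable (fun x : Fin d → ℝ => x k * x l * lw (∑ m, x m * u m)) (μd d)) :
    ∫ x, (∑ k, c k * x k) * (∑ l, e l * x l) * lw (∑ m, x m * u m) ∂(μd d)
      = ∑ k, ∑ l, c k * e l * ∫ x, x k * x l * lw (∑ m, x m * u m) ∂(μd d) := by
  have hpt : ∀ x : Fin d → ℝ,
      (∑ k, c k * x k) * (∑ l, e l * x l) * lw (∑ m, x m * u m)
      = ∑ k, ∑ l, (c k * e l) * (x k * x l * lw (∑ m, x m * u m)) := by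
    intro x
    rw [Finset.sum_mul_sum, Finset.sum_mul]
    refine Finset.sum_congr rfl fun k _ => ?_
    rw [Finset.sum_mul]
    refine Finset.sum_congr rfl fun l _ => ?_
    ring
  simp_rw [hpt]
  rw [integral_finset_sum _ (fun k _ => integrable_finset_sum _
    (fun l _ => (hint k l).const_mul _))]
  refine Finset.sum_congr rfl fun k _ => ?_
  rw [integral_finset_sum _ (fun l _ => (hint k l).const_mul _)]
  refine Finset.sum_congr rfl fun l _ => ?_
  exact integral_const_mul _ _

open Matrix in
lemma entry_rot {d : ℕ} [NeZero d] (u : Fin d → ℝ) (a : ℝ)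
    (R : Matrix (Fin d) (Fin d) ℝ) (hR : R * Rᵀ = 1) (hR' : Rᵀ * R = 1)
    (hRu : R.mulVec u = fun i => if i = 0 then a else 0) (i j : Fin d)
    (hint : ∀ k l : Fin d,
      Integrable (fun x : Fin d → ℝ => x k * x l * lw (∑ m, x m * u m)) (μd d)) :
    ∑ k, ∑ l, R i k * R j l * ∫ x, x k * x l * lw (∑ m, x m * u m) ∂(μd d)
      = ∫ y, y i * y j * lw (a * y 0) ∂(μd d) := by
  rw [← quad_form u (R i) (R j) hint]
  set F : (Fin d → ℝ) → ℝ :=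
    fun y => y i * y j * lw (∑ m, (Rᵀ.mulVec y) m * u m) with hF
  have hmulVc : ∀ A : Matrix (Fin d) (Fin d) ℝ, ∀ m : Fin d,
      Continuous fun y : Fin d → ℝ => (A.mulVec y) m := by
    intro A m
    simp only [Matrix.mulVec, dotProduct]
    exact continuous_finset_sum _ fun n _ => continuous_const.mul (continuous_apply n)
  have hFc : Continuous F :=
    ((continuous_apply i).mul (continuous_apply j)).mul
      (lw_cont.comp (continuous_finset_sum _ fun m _ => (hmulVc Rᵀ m).mul continuous_const))
  have hcomp : ∀ x : Fin d → ℝ,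
      F (R.mulVec x) = (∑ k, R i k * x k) * (∑ l, R j l * x l) * lw (∑ m, x m * u m) := by
    intro x
    have hx : Rᵀ.mulVec (R.mulVec x) = x := by
      rw [Matrix.mulVec_mulVec, hR', Matrix.one_mulVec]
    simp only [hF, hx]
    simp [Matrix.mulVec, dotProduct]
  have hmeas : Measurable fun x : Fin d → ℝ => R.mulVec x :=
    (continuous_pi fun m => hmulVc R m).measurable
  have hstep : ∫ x, F (R.mulVec x) ∂(μd d) = ∫ y, F y ∂(μd d) :=
    calc ∫ x, F (R.mulVec x) ∂(μd d)
        = ∫ y, F y ∂(Measure.map (fun x => R.mulVec x) (Measure.pi fun _ : Fin d => ν)) :=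
          (integral_map hmeas.aemeasurable hFc.aestronglyMeasurable).symm
      _ = ∫ y, F y ∂(μd d) := by rw [map_rot_gauss R hR hR']
  have hFy : ∀ y : Fin d → ℝ, F y = y i * y j * lw (a * y 0) := by
    intro y
    simp only [hF]
    congr 1
    have h1 : ∑ m, (Rᵀ.mulVec y) m * u m = (Rᵀ.mulVec y) ⬝ᵥ u := rfl
    have h2 : (Rᵀ.mulVec y) ⬝ᵥ u = y ⬝ᵥ (R.mulVec u) := by
      rw [Matrix.mulVec_transpose, ← Matrix.dotProduct_mulVec]
    rw [h1, h2, hRu]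
    simp [dotProduct, mul_comm]
  calc ∫ x, (∑ k, R i k * x k) * (∑ l, R j l * x l) * lw (∑ m, x m * u m) ∂(μd d)
      = ∫ x, F (R.mulVec x) ∂(μd d) := by
        congr 1; funext x; rw [hcomp]
    _ = ∫ y, F y ∂(μd d) := hstep
    _ = ∫ y, y i * y j * lw (a * y 0) ∂(μd d) := by
        congr 1; funext y; rw [hFy]

/-- coordinate factor functions -/
noncomputable def gfun {d : ℕ} [NeZero d] (a : ℝ) (i j k : Fin d) (t : ℝ) : ℝ :=
  (if k = i then t else 1) * (if k = j then t else 1) * (if k = 0 then lw (a*t) else 1)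

lemma split_int {d : ℕ} [NeZero d] (a : ℝ) (i j : Fin d) :
    ∫ y, y i * y j * lw (a * y 0) ∂(μd d) = ∏ k, ∫ t, gfun a i j k t ∂ν := by
  rw [← pi_prod_int]
  congr 1
  funext y
  unfold gfun
  rw [Finset.prod_mul_distrib, Finset.prod_mul_distrib]
  congr 1
  · congr 1
    · rw [Finset.prod_ite_eq']; simp
    · rw [Finset.prod_ite_eq']; simp
  · rw [Finset.prod_ite_eq']
    simp [mul_comm]

lemma coord_integrable {d : ℕ} (k : Fin d) (f : ℝ → ℝ) (hf : Integrable f ν) :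
    Integrable (fun x : Fin d → ℝ => f (x k)) (μd d) := by
  have h := pi_prod_integrable (fun i => if i = k then f else fun _ => (1:ℝ))
    (fun i => by by_cases h : i = k <;> simp [h, hf])
  refine h.congr (Eventually.of_forall fun x => ?_)
  show (∏ i, (if i = k then f else fun _ => (1:ℝ)) (x i)) = f (x k)
  rw [Finset.prod_eq_single k (fun i _ hik => by rw [if_neg hik]) (by simp), if_pos rfl]

lemma main_integrable {d : ℕ} (u : Fin d → ℝ) (k l : Fin d) :
    Integrable (fun x : Fin d → ℝ => x k * x l * lw (∑ m, x m * u m)) (μd d) := by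
  have hb : Integrable (fun x : Fin d → ℝ => (x k)^2 + (x l)^2) (μd d) :=
    (coord_integrable k _ nu_integrable_sq).add (coord_integrable l _ nu_integrable_sq)
  refine hb.mono' ?_ (Eventually.of_forall fun x => ?_)
  · exact (((continuous_apply k).mul (continuous_apply l)).mul
      (lw_cont.comp (continuous_finset_sum _ fun m _ =>
        (continuous_apply m).mul continuous_const))).aestronglyMeasurable
  · rw [Real.norm_eq_abs, abs_mul, abs_mul]
    nlinarith [sq_nonneg (|x k| - |x l|), sq_abs (x k), sq_abs (x l),
      lw_abs (∑ m, x m * u m), abs_nonneg (x k), abs_nonneg (x l),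
      abs_nonneg (lw (∑ m, x m * u m)),
      mul_nonneg (abs_nonneg (x k)) (abs_nonneg (x l))]

lemma prob_one : ∫ (_ : ℝ), (1:ℝ) ∂ν = 1 := by simp

lemma gfun_int_offdiag {d : ℕ} [NeZero d] (a : ℝ) (i j : Fin d) (hij : i ≠ j) :
    ∏ k, ∫ t, gfun a i j k t ∂ν = 0 := by
  by_cases hj : j = 0
  · have hi0 : i ≠ 0 := fun h => hij (h.trans hj.symm)
    refine Finset.prod_eq_zero (Finset.mem_univ i) ?_
    have heq : (fun t => gfun a i j i t) = fun t : ℝ => t :=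
      funext fun t => by simp [gfun, hij, hi0]
    calc ∫ t, gfun a i j i t ∂ν = ∫ t, t ∂ν := by rw [heq]
      _ = 0 := nu_mean
  · refine Finset.prod_eq_zero (Finset.mem_univ j) ?_
    have hji : j ≠ i := fun h => hij h.symm
    have heq : (fun t => gfun a i j j t) = fun t : ℝ => t :=
      funext fun t => by simp [gfun, hji, hj]
    calc ∫ t, gfun a i j j t ∂ν = ∫ t, t ∂ν := by rw [heq]
      _ = 0 := nu_mean

lemma gfun_int_zero {d : ℕ} [NeZero d] (a : ℝ) (k : Fin d) :
    ∫ t, gfun a 0 0 k t ∂ν = if k = 0 then (∫ g, g^2 * lw (a*g) ∂ν) else 1 := by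
  by_cases hk : k = 0
  · subst hk
    rw [if_pos rfl]
    have heq : (fun t => gfun a (0 : Fin d) 0 0 t) = fun t : ℝ => t^2 * lw (a*t) :=
      funext fun t => by simp only [gfun, eq_self_iff_true, if_true]; ring
    rw [heq]
  · rw [if_neg hk]
    have heq : (fun t => gfun a (0 : Fin d) 0 k t) = fun _ : ℝ => (1:ℝ) :=
      funext fun t => by simp [gfun, hk]
    rw [heq, prob_one]

lemma gfun_int_diag {d : ℕ} [NeZero d] (a : ℝ) (i : Fin d) (hi : i ≠ 0) (k : Fin d) :
    ∫ t, gfun a i i k t ∂ν = if k = 0 then (∫ g, lw (a*g) ∂ν) else 1 := by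
  by_cases hk : k = 0
  · subst hk
    rw [if_pos rfl]
    have h0i : (0 : Fin d) ≠ i := fun h => hi h.symm
    have heq : (fun t => gfun a i i 0 t) = fun t : ℝ => lw (a*t) :=
      funext fun t => by simp [gfun, h0i]
    rw [heq]
  · rw [if_neg hk]
    by_cases hki : k = i
    · subst hki
      have heq : (fun t => gfun a k k k t) = fun t : ℝ => t^2 :=
        funext fun t => by simp only [gfun, eq_self_iff_true, if_true, if_neg hk, mul_one]; ring
      rw [heq, nu_var]
    · have heq : (fun t => gfun a i i k t) = fun _ : ℝ => (1:ℝ) :=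
        funext fun t => by simp [gfun, hk, hki]
      rw [heq, prob_one]

/-- For `X ∼ N(0, I_d)` and `u ≠ 0`, the matrix
`M = E[X Xᵀ · e^{Xᵀu}/(1+e^{Xᵀu})²]` is symmetric positive semidefinite and,
after rotation by any orthogonal `R` with `R u = ‖u‖₂ e₁`, is diagonal with
exactly two diagonal values: `λ₁ = E[g² e^{‖u‖g}/(1+e^{‖u‖g})²]` in the
direction of `u`, and `λ₂ = E[e^{‖u‖g}/(1+e^{‖u‖g})²]` repeated `d-1` times,
where `g ∼ N(0,1)`. -/
theorem gaussian_logistic_second_moment_diagonalization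
    (d : ℕ) [NeZero d] (u : Fin d → ℝ) (hu : u ≠ 0)
    (μ : Measure (Fin d → ℝ))
    (hμ : μ = Measure.pi (fun _ : Fin d => gaussianReal 0 1))
    (M : Matrix (Fin d) (Fin d) ℝ)
    (hM : ∀ i j, M i j = ∫ x, x i * x j *
      (Real.exp (∑ k, x k * u k) / (1 + Real.exp (∑ k, x k * u k)) ^ 2) ∂μ)
    (a : ℝ) (ha : a = Real.sqrt (∑ i, u i ^ 2))
    (R : Matrix (Fin d) (Fin d) ℝ)
    (hR : R * Rᵀ = 1) (hR' : Rᵀ * R = 1)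
    (hRu : R.mulVec u = fun i => if i = 0 then a else 0)
    (lam₁ lam₂ : ℝ)
    (hlam₁ : lam₁ = ∫ g, g ^ 2 *
      (Real.exp (a * g) / (1 + Real.exp (a * g)) ^ 2) ∂(gaussianReal 0 1))
    (hlam₂ : lam₂ = ∫ g,
      Real.exp (a * g) / (1 + Real.exp (a * g)) ^ 2 ∂(gaussianReal 0 1)) :
    M.IsSymm ∧ M.PosSemidef ∧
      (∀ i j, i ≠ j → (R * M * Rᵀ) i j = 0) ∧
      (R * M * Rᵀ) 0 0 = lam₁ ∧
      (∀ i : Fin d, i ≠ 0 → (R * M * Rᵀ) i i = lam₂) := by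
  subst hμ
  have hM' : ∀ k l, M k l = ∫ x, x k * x l * lw (∑ m, x m * u m) ∂(μd d) :=
    fun k l => hM k l
  have hlam₁' : lam₁ = ∫ g, g^2 * lw (a*g) ∂ν := hlam₁
  have hlam₂' : lam₂ = ∫ g, lw (a*g) ∂ν := hlam₂
  have hint : ∀ k l : Fin d,
      Integrable (fun x : Fin d → ℝ => x k * x l * lw (∑ m, x m * u m)) (μd d) :=
    fun k l => main_integrable u k l
  have hsymm : M.IsSymm := by
    refine Matrix.ext fun i j => ?_
    show M j i = M i j
    rw [hM' j i, hM' i j]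
    congr 1; funext x; ring
  have hquad : ∀ v : Fin d → ℝ, dotProduct v (M.mulVec v)
      = ∫ x, (∑ k, v k * x k) * (∑ l, v l * x l) * lw (∑ m, x m * u m) ∂(μd d) := by
    intro v
    rw [quad_form u v v hint]
    simp only [dotProduct, Matrix.mulVec, Finset.mul_sum]
    refine Finset.sum_congr rfl fun k _ => Finset.sum_congr rfl fun l _ => ?_
    rw [hM' k l]; ring
  have hpsd : M.PosSemidef := by
    refine Matrix.posSemidef_iff_dotProduct_mulVec.mpr ⟨(Matrix.conjTranspose_eq_transpose_of_trivial M).trans hsymm, fun v => ?_⟩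
    have hsv : star v = v := rfl
    rw [hsv, hquad v]
    refine integral_nonneg fun x => ?_
    exact mul_nonneg (mul_self_nonneg _) (lw_nonneg _)
  have key : ∀ i j, (R * M * Rᵀ) i j = ∏ k, ∫ t, gfun a i j k t ∂ν := by
    intro i j
    have h1 : (R * M * Rᵀ) i j = ∑ k, ∑ l, R i k * R j l * M k l := by
      simp only [Matrix.mul_apply, Matrix.transpose_apply, Finset.sum_mul]
      rw [Finset.sum_comm]
      refine Finset.sum_congr rfl fun k _ => Finset.sum_congr rfl fun l _ => by ring
    rw [h1]
    simp_rw [hM']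
    rw [entry_rot u a R hR hR' hRu i j hint, split_int]
  refine ⟨hsymm, hpsd, ?_, ?_, ?_⟩
  · intro i j hij
    rw [key i j, gfun_int_offdiag a i j hij]
  · rw [key 0 0]
    calc ∏ k, ∫ t, gfun a 0 0 k t ∂ν
        = ∏ k : Fin d, if k = 0 then (∫ g, g^2 * lw (a*g) ∂ν) else 1 :=
          Finset.prod_congr rfl fun k _ => gfun_int_zero a k
      _ = ∫ g, g^2 * lw (a*g) ∂ν := by rw [Finset.prod_ite_eq']; simp
      _ = lam₁ := hlam₁'.symm
  · intro i hi
    rw [key i i]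
    calc ∏ k, ∫ t, gfun a i i k t ∂ν
        = ∏ k : Fin d, if k = 0 then (∫ g, lw (a*g) ∂ν) else 1 :=
          Finset.prod_congr rfl fun k _ => gfun_int_diag a i hi k
      _ = ∫ g, lw (a*g) ∂ν := by rw [Finset.prod_ite_eq']; simp
      _ = lam₂ := hlam₂'.symm
end

section
/- For g ∼ N(0,1) and a = ‖u‖₂ > 0, the eigenvalue λ₂(a) = E[ e^{a g}/(1+e^{a g})² ] satisfies λ₂(a) ≤ 1/a; moreover for a ≥ √2, λ₂(a) ≥ c/a for some absolute constant c > 0, i.e., λ₂(a) = Θ(1/a). -/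
open MeasureTheory ProbabilityTheory Real Set Filter

namespace GaussLogistAux

noncomputable def f (a g : ℝ) : ℝ := Real.exp (a * g) / (1 + Real.exp (a * g)) ^ 2
noncomputable def F (a g : ℝ) : ℝ := -((a * (1 + Real.exp (a * g)))⁻¹)

lemma one_add_exp_pos (x : ℝ) : 0 < 1 + Real.exp x := by positivity

lemma f_nonneg (a g : ℝ) : 0 ≤ f a g := by unfold f; positivity

lemma f_even (a g : ℝ) : f a (-g) = f a g := by
  unfold f
  rw [mul_neg, Real.exp_neg]
  have h : Real.exp (a * g) ≠ 0 := (Real.exp_pos _).ne'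
  field_simp
  ring

lemma f_le_one (a g : ℝ) : f a g ≤ 1 := by
  unfold f
  rw [div_le_one (by positivity)]
  nlinarith [Real.exp_pos (a * g), sq_nonneg (1 + Real.exp (a * g))]

lemma hasDerivAt_F (a : ℝ) (ha : a ≠ 0) (g : ℝ) : HasDerivAt (F a) (f a g) g := by
  have h1 : HasDerivAt (fun x : ℝ => a * x) a g := by
    simpa using (hasDerivAt_id g).const_mul a
  have h2 : HasDerivAt (fun x : ℝ => Real.exp (a * x)) (Real.exp (a * g) * a) g := h1.exp
  have h3 : HasDerivAt (fun x : ℝ => 1 + Real.exp (a * x)) (Real.exp (a * g) * a) g :=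
    h2.const_add 1
  have h4 := h3.inv (one_add_exp_pos (a * g)).ne'
  have h5 := (h4.const_mul a⁻¹).neg
  have hne : (1 : ℝ) + Real.exp (a * g) ≠ 0 := (one_add_exp_pos (a * g)).ne'
  have e1 : F a = -fun y => a⁻¹ * (fun x : ℝ => 1 + Real.exp (a * x))⁻¹ y := by
    funext x
    unfold F
    rw [mul_inv]
    rfl
  have e2 : f a g = -(a⁻¹ * (-(Real.exp (a * g) * a) / (1 + Real.exp (a * g)) ^ 2)) := by
    unfold f
    field_simp
  rw [e1, e2]; exact h5

lemma tendsto_F_atTop (a : ℝ) (ha : 0 < a) : Tendsto (F a) atTop (nhds 0) := by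
  have h1 : Tendsto (fun g : ℝ => a * g) atTop atTop :=
    Tendsto.const_mul_atTop ha tendsto_id
  have h2 : Tendsto (fun g : ℝ => Real.exp (a * g)) atTop atTop :=
    Real.tendsto_exp_atTop.comp h1
  have h3 : Tendsto (fun g : ℝ => 1 + Real.exp (a * g)) atTop atTop :=
    tendsto_atTop_add_const_left _ 1 h2
  have h4 : Tendsto (fun g : ℝ => a * (1 + Real.exp (a * g))) atTop atTop :=
    Tendsto.const_mul_atTop ha h3
  have h5 := h4.inv_tendsto_atTop
  unfold F
  have := h5.neg
  rwa [neg_zero] at this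

lemma tendsto_F_atBot (a : ℝ) (ha : 0 < a) : Tendsto (F a) atBot (nhds (-a⁻¹)) := by
  have h1 : Tendsto (fun g : ℝ => a * g) atBot atBot :=
    Tendsto.const_mul_atBot ha tendsto_id
  have h2 : Tendsto (fun g : ℝ => Real.exp (a * g)) atBot (nhds 0) :=
    Real.tendsto_exp_atBot.comp h1
  have h3 : Tendsto (fun g : ℝ => 1 + Real.exp (a * g)) atBot (nhds (1 + 0)) :=
    tendsto_const_nhds.add h2
  have h4 : Tendsto (fun g : ℝ => a * (1 + Real.exp (a * g))) atBot (nhds (a * (1 + 0))) :=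
    h3.const_mul a
  have h5 := (h4.inv₀ (by simp [ha.ne'])).neg
  unfold F
  convert h5 using 2
  norm_num

lemma integral_Ioi_f (a : ℝ) (ha : 0 < a) :
    IntegrableOn (f a) (Ioi 0) volume ∧ ∫ x in Ioi (0 : ℝ), f a x = (2 * a)⁻¹ := by
  have hderiv : ∀ x ∈ Ici (0 : ℝ), HasDerivAt (F a) (f a x) x := fun x _ =>
    hasDerivAt_F a ha.ne' x
  have hpos : ∀ x ∈ Ioi (0 : ℝ), 0 ≤ f a x := fun x _ => f_nonneg a x
  have htop := tendsto_F_atTop a ha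
  refine ⟨integrableOn_Ioi_deriv_of_nonneg' hderiv hpos htop, ?_⟩
  rw [integral_Ioi_of_hasDerivAt_of_nonneg' hderiv hpos htop]
  unfold F
  rw [mul_zero, Real.exp_zero]
  ring_nf

lemma integrableOn_Iic_f (a : ℝ) (ha : 0 < a) : IntegrableOn (f a) (Iic 0) volume := by
  have h := (integral_Ioi_f a ha).1
  rw [← Measure.map_neg_eq_self (volume : Measure ℝ)]
  have m : MeasurableEmbedding fun x : ℝ => -x := (Homeomorph.neg ℝ).measurableEmbedding
  rw [m.integrableOn_map_iff]
  have : (f a ∘ fun x : ℝ => -x) = f a := by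
    funext x; exact f_even a x
  rw [this]
  simp only [neg_preimage, neg_Iic, neg_zero]
  exact Iff.mpr integrableOn_Ici_iff_integrableOn_Ioi h

lemma integrable_f (a : ℝ) (ha : 0 < a) : Integrable (f a) volume := by
  have h := (integrableOn_Iic_f a ha).union (integral_Ioi_f a ha).1
  rwa [Iic_union_Ioi, integrableOn_univ] at h

lemma integral_f (a : ℝ) (ha : 0 < a) : ∫ x, f a x = 1 / a := by
  rw [← intervalIntegral.integral_Iic_add_Ioi (integrableOn_Iic_f a ha) (integral_Ioi_f a ha).1]
  have hIic : ∫ x in Iic (0 : ℝ), f a x = ∫ x in Ioi (0 : ℝ), f a x := by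
    rw [← neg_zero, ← integral_comp_neg_Iic, neg_zero]
    refine setIntegral_congr_fun measurableSet_Iic fun x _ => ?_
    exact (f_even a x).symm
  rw [hIic, (integral_Ioi_f a ha).2, ← two_mul, mul_inv, ← mul_assoc,
    mul_inv_cancel₀ two_ne_zero, one_mul, one_div]

lemma measurable_f (a : ℝ) : Measurable (f a) := by
  unfold f
  fun_prop

lemma gauss_integral_eq (h : ℝ → ℝ) :
    ∫ g, h g ∂(gaussianReal 0 1) = ∫ g, gaussianPDFReal 0 1 g * h g := by
  rw [gaussianReal_of_var_ne_zero 0 one_ne_zero]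
  have hpdf : gaussianPDF 0 1 = fun x => ((gaussianPDFReal 0 1 x).toNNReal : ENNReal) := rfl
  rw [hpdf, integral_withDensity_eq_integral_smul
    ((measurable_gaussianPDFReal 0 1).real_toNNReal) h]
  congr 1
  funext x
  rw [NNReal.smul_def, Real.coe_toNNReal _ (gaussianPDFReal_nonneg 0 1 x)]
  simp [smul_eq_mul]

lemma pdf_le_one (x : ℝ) : gaussianPDFReal 0 1 x ≤ 1 := by
  unfold gaussianPDFReal
  simp only [NNReal.coe_one, mul_one, sub_zero]
  have h1 : Real.exp (-x ^ 2 / 2) ≤ 1 := by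
    rw [Real.exp_le_one_iff]
    nlinarith [sq_nonneg x]
  have h2 : (1 : ℝ) ≤ Real.sqrt (2 * π) := by
    rw [show (1 : ℝ) = Real.sqrt 1 by simp]
    exact Real.sqrt_le_sqrt (by nlinarith [Real.pi_gt_three])
  have h3 : (Real.sqrt (2 * π))⁻¹ ≤ 1 := by
    rw [← one_div, div_le_one (by positivity)]; exact h2
  calc (Real.sqrt (2 * π))⁻¹ * Real.exp (-x ^ 2 / 2)
      ≤ 1 * 1 := mul_le_mul h3 h1 (Real.exp_pos _).le zero_le_one
    _ = 1 := one_mul 1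

end GaussLogistAux

open GaussLogistAux

/-- For `g ∼ N(0,1)` and `a = ‖u‖₂ > 0`, the eigenvalue
`λ₂(a) = E[e^{ag}/(1+e^{ag})²]` satisfies `λ₂(a) ≤ 1/a`; moreover for
`a ≥ √2`, `λ₂(a) ≥ c/a` for some absolute constant `c > 0`,
i.e. `λ₂(a) = Θ(1/a)`. -/
theorem gaussian_logistic_eigenvalue_two_bounds
    (lam₂ : ℝ → ℝ)
    (hlam₂ : ∀ a : ℝ, lam₂ a =
      ∫ g, Real.exp (a * g) / (1 + Real.exp (a * g)) ^ 2 ∂(gaussianReal 0 1)) :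
    (∀ a : ℝ, 0 < a → lam₂ a ≤ 1 / a) ∧
      ∃ c : ℝ, 0 < c ∧ ∀ a : ℝ, Real.sqrt 2 ≤ a → c / a ≤ lam₂ a := by
  have hl : ∀ a : ℝ, lam₂ a = ∫ g, gaussianPDFReal 0 1 g * f a g := by
    intro a
    rw [hlam₂ a]; exact gauss_integral_eq (f a)
  constructor
  · intro a ha
    rw [hl a, ← integral_f a ha]
    apply integral_mono_of_nonneg
    · exact Filter.Eventually.of_forall fun x =>
        mul_nonneg (gaussianPDFReal_nonneg 0 1 x) (f_nonneg a x)
    · exact integrable_f a ha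
    · refine Filter.Eventually.of_forall fun x => ?_
      calc gaussianPDFReal 0 1 x * f a x ≤ 1 * f a x :=
        mul_le_mul_of_nonneg_right (pdf_le_one x) (f_nonneg a x)
      _ = f a x := one_mul _
  · refine ⟨(Real.sqrt (2 * π))⁻¹ * Real.exp (-(4 : ℝ)⁻¹) * ((1 + Real.exp 1) ^ 2)⁻¹,
      by have := Real.pi_pos; positivity, fun a hsqrt => ?_⟩
    set c : ℝ := (Real.sqrt (2 * π))⁻¹ * Real.exp (-(4 : ℝ)⁻¹) * ((1 + Real.exp 1) ^ 2)⁻¹ with hc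
    have ha : 0 < a := lt_of_lt_of_le (Real.sqrt_pos.mpr two_pos) hsqrt
    have hc0 : 0 < c := by rw [hc]; positivity
    -- the integrand wrt volume
    set h : ℝ → ℝ := fun x => gaussianPDFReal 0 1 x * f a x with hh
    have hnn : ∀ x, 0 ≤ h x := fun x =>
      mul_nonneg (gaussianPDFReal_nonneg 0 1 x) (f_nonneg a x)
    have hint : Integrable h volume := by
      refine (integrable_f a ha).mono ?_ ?_
      · exact ((measurable_gaussianPDFReal 0 1).mul (measurable_f a)).aestronglyMeasurable
      · refine Filter.Eventually.of_forall fun x => ?_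
        rw [Real.norm_eq_abs, Real.norm_eq_abs, abs_of_nonneg (hnn x),
          abs_of_nonneg (f_nonneg a x)]
        calc gaussianPDFReal 0 1 x * f a x ≤ 1 * f a x :=
          mul_le_mul_of_nonneg_right (pdf_le_one x) (f_nonneg a x)
        _ = f a x := one_mul _
    -- pointwise lower bound on Ioc 0 a⁻¹
    have hbound : ∀ x ∈ Ioc (0 : ℝ) a⁻¹, c ≤ h x := by
      intro x hx
      obtain ⟨hx0, hx1⟩ := hx
      have hx2 : x ^ 2 ≤ 2⁻¹ := by
        have h2 : (2 : ℝ) ≤ a ^ 2 := by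
          calc (2 : ℝ) = Real.sqrt 2 * Real.sqrt 2 := by
                rw [Real.mul_self_sqrt (by norm_num)]
          _ ≤ a * a := mul_le_mul hsqrt hsqrt (Real.sqrt_nonneg 2) ha.le
          _ = a ^ 2 := (sq a).symm
        have hxa : x ≤ a⁻¹ := hx1
        calc x ^ 2 ≤ (a⁻¹) ^ 2 := by
              apply pow_le_pow_left₀ hx0.le hxa
        _ = (a ^ 2)⁻¹ := by rw [inv_pow]
        _ ≤ 2⁻¹ := by
              apply inv_anti₀ two_pos h2
      have hpdf : (Real.sqrt (2 * π))⁻¹ * Real.exp (-(4 : ℝ)⁻¹) ≤ gaussianPDFReal 0 1 x := by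
        unfold gaussianPDFReal
        simp only [NNReal.coe_one, mul_one, sub_zero]
        apply mul_le_mul_of_nonneg_left _ (by positivity)
        apply Real.exp_le_exp.mpr
        nlinarith
      have hax : a * x ≤ 1 := by
        calc a * x ≤ a * a⁻¹ := mul_le_mul_of_nonneg_left hx1 ha.le
        _ = 1 := mul_inv_cancel₀ ha.ne'
      have hf : ((1 + Real.exp 1) ^ 2)⁻¹ ≤ f a x := by
        unfold f
        rw [le_div_iff₀ (by positivity)]
        have he1 : Real.exp (a * x) ≤ Real.exp 1 := Real.exp_le_exp.mpr hax
        have he2 : (1 : ℝ) ≤ Real.exp (a * x) := by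
          rw [← Real.exp_zero]
          exact Real.exp_le_exp.mpr (by positivity)
        have hsq : (1 + Real.exp (a * x)) ^ 2 ≤ (1 + Real.exp 1) ^ 2 := by
          apply pow_le_pow_left₀ (by positivity) (by linarith)
        calc ((1 + Real.exp 1) ^ 2)⁻¹ * (1 + Real.exp (a * x)) ^ 2
            ≤ ((1 + Real.exp 1) ^ 2)⁻¹ * (1 + Real.exp 1) ^ 2 := by
              apply mul_le_mul_of_nonneg_left hsq (by positivity)
        _ = 1 := inv_mul_cancel₀ (by positivity)
        _ ≤ Real.exp (a * x) := he2
      calc c = (Real.sqrt (2 * π))⁻¹ * Real.exp (-(4 : ℝ)⁻¹) * ((1 + Real.exp 1) ^ 2)⁻¹ := hc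
      _ ≤ gaussianPDFReal 0 1 x * f a x := by
            apply mul_le_mul hpdf hf (by positivity)
              (gaussianPDFReal_nonneg 0 1 x)
      _ = h x := rfl
    have hmeas : volume (Ioc (0 : ℝ) a⁻¹) = ENNReal.ofReal a⁻¹ := by
      rw [Real.volume_Ioc, sub_zero]
    have hstep1 : c * a⁻¹ ≤ ∫ x in Ioc (0 : ℝ) a⁻¹, h x := by
      have := setIntegral_ge_of_const_le_real (measurableSet_Ioc)
        (by rw [hmeas]; exact ENNReal.ofReal_ne_top) hbound hint.integrableOn
      rwa [measureReal_def, hmeas, ENNReal.toReal_ofReal (by positivity)] at this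
    have hstep2 : ∫ x in Ioc (0 : ℝ) a⁻¹, h x ≤ ∫ x, h x :=
      setIntegral_le_integral hint (Filter.Eventually.of_forall hnn)
    rw [hl a, div_eq_mul_inv]
    calc c * a⁻¹ ≤ ∫ x in Ioc (0 : ℝ) a⁻¹, h x := hstep1
    _ ≤ ∫ x, h x := hstep2
end

section
/- For g ∼ N(0,1) and a = ‖u‖₂ > 0, the eigenvalue λ₁(a) = E[ g² e^{a g}/(1+e^{a g})² ] satisfies λ₁(a) ≤ 4/a³; moreover for a ≥ √2, λ₁(a) ≥ c/a³ for some absolute constant c > 0, i.e., λ₁(a) = Θ(1/a³). -/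
open MeasureTheory ProbabilityTheory Set Real
open scoped ENNReal NNReal

-- helper: pointwise upper bound on logistic kernel
lemma sigma_le_exp_neg_abs (t : ℝ) :
    Real.exp t / (1 + Real.exp t) ^ 2 ≤ Real.exp (-|t|) := by
  rw [div_le_iff₀ (by positivity)]
  rcases le_or_gt 0 t with ht | ht
  · rw [abs_of_nonneg ht]
    have h2 : Real.exp (-t) * (Real.exp t * Real.exp t) = Real.exp t := by
      rw [← Real.exp_add, ← Real.exp_add]; ring_nf
    nlinarith [Real.exp_pos t, Real.exp_pos (-t)]
  · rw [abs_of_neg ht, neg_neg]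
    nlinarith [Real.exp_pos t, mul_pos (Real.exp_pos t) (Real.exp_pos t),
      mul_pos (mul_pos (Real.exp_pos t) (Real.exp_pos t)) (Real.exp_pos t)]

-- helper: integrability of f ∘ abs from integrability on Ioi 0
lemma integrable_comp_abs' {f : ℝ → ℝ} (hf : IntegrableOn f (Ioi 0)) :
    Integrable (fun x => f |x|) := by
  have hI : IntegrableOn (fun x => f |x|) (Ioi 0) := by
    refine hf.congr_fun (fun x hx => ?_) measurableSet_Ioi
    rw [abs_of_pos hx]
  have int_Iic : IntegrableOn (fun x ↦ f |x|) (Iic 0) := by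
    rw [← Measure.map_neg_eq_self (volume : Measure ℝ)]
    have m : MeasurableEmbedding fun x : ℝ => -x :=
      (Homeomorph.neg ℝ).measurableEmbedding
    rw [m.integrableOn_map_iff]
    simp_rw [Function.comp_def, abs_neg, neg_preimage, neg_Iic, neg_zero]
    exact Iff.mpr integrableOn_Ici_iff_integrableOn_Ioi hI
  rw [← integrableOn_univ, ← Iic_union_Ioi (a := (0:ℝ))]
  exact int_Iic.union hI

lemma majorant_integrable {a : ℝ} (ha : 0 < a) :
    Integrable (fun x : ℝ => x ^ 2 * Real.exp (-(a * |x|))) := by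
  have h0 : IntegrableOn (fun x : ℝ => x ^ 2 * Real.exp (-(a * x))) (Ioi 0) := by
    refine (integrableOn_rpow_mul_exp_neg_mul_rpow (p := 1) (s := 2) (by norm_num)
      zero_lt_one ha).congr_fun (fun x hx => ?_) measurableSet_Ioi
    dsimp only
    rw [Real.rpow_one, show (2:ℝ) = ((2:ℕ):ℝ) by norm_num, Real.rpow_natCast, neg_mul]
  have := integrable_comp_abs'  (f := fun t => t ^ 2 * Real.exp (-(a * t))) h0
  refine this.congr (Filter.Eventually.of_forall fun x => ?_)
  simp only [sq_abs]

lemma majorant_integral {a : ℝ} (ha : 0 < a) :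
    ∫ x : ℝ, x ^ 2 * Real.exp (-(a * |x|)) = 4 / a ^ 3 := by
  have h1 : (fun x : ℝ => x ^ 2 * Real.exp (-(a * |x|)))
      = fun x => (fun t => t ^ 2 * Real.exp (-(a * t))) |x| := by
    funext x; simp only [sq_abs]
  rw [h1, integral_comp_abs (f := fun t => t ^ 2 * Real.exp (-(a * t)))]
  have h2 : ∫ x in Ioi (0:ℝ), x ^ 2 * Real.exp (-(a * x))
      = (1 / a) ^ (3:ℝ) * Real.Gamma 3 := by
    rw [← integral_rpow_mul_exp_neg_mul_Ioi (by norm_num : (0:ℝ) < 3) ha]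
    refine setIntegral_congr_fun measurableSet_Ioi fun x hx => ?_
    rw [show (3:ℝ) - 1 = ((2:ℕ):ℝ) by norm_num, Real.rpow_natCast]
  have h3 : Real.Gamma 3 = 2 := by
    rw [show (3:ℝ) = ((2:ℕ):ℝ) + 1 by norm_num, Real.Gamma_nat_eq_factorial]
    norm_num
  rw [h2, h3, show (3:ℝ) = ((3:ℕ):ℝ) by norm_num, Real.rpow_natCast]
  field_simp
  ring

lemma sqrt_two_pi_ge_two : (2:ℝ) ≤ Real.sqrt (2 * Real.pi) := by
  calc (2:ℝ) = Real.sqrt (2 ^ 2) := (Real.sqrt_sq (by norm_num)).symm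
    _ ≤ Real.sqrt (2 * Real.pi) := Real.sqrt_le_sqrt (by nlinarith [Real.pi_gt_three])

/-- For `g ∼ N(0,1)` and `a = ‖u‖₂ > 0`, the eigenvalue
`λ₁(a) = E[g² e^{ag}/(1+e^{ag})²]` satisfies `λ₁(a) ≤ 4/a³`; moreover for
`a ≥ √2`, `λ₁(a) ≥ c/a³` for some absolute constant `c > 0`,
i.e. `λ₁(a) = Θ(1/a³)`. -/
theorem gaussian_logistic_eigenvalue_one_bounds
    (lam₁ : ℝ → ℝ)
    (hlam₁ : ∀ a : ℝ, lam₁ a = ∫ g, g ^ 2 *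
      (Real.exp (a * g) / (1 + Real.exp (a * g)) ^ 2) ∂(gaussianReal 0 1)) :
    (∀ a : ℝ, 0 < a → lam₁ a ≤ 4 / a ^ 3) ∧
      ∃ c : ℝ, 0 < c ∧ ∀ a : ℝ, Real.sqrt 2 ≤ a → c / a ^ 3 ≤ lam₁ a := by
  have key : ∀ a : ℝ, lam₁ a = ∫ x, gaussianPDFReal 0 1 x *
      (x ^ 2 * (Real.exp (a * x) / (1 + Real.exp (a * x)) ^ 2)) := by
    intro a
    rw [hlam₁ a, gaussianReal_of_var_ne_zero 0 one_ne_zero]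
    have hmeas : Measurable fun x => (gaussianPDFReal 0 1 x).toNNReal :=
      (measurable_gaussianPDFReal 0 1).real_toNNReal
    rw [show gaussianPDF 0 1 = fun x => (((gaussianPDFReal 0 1 x).toNNReal : ℝ≥0) : ℝ≥0∞)
      from rfl]
    rw [integral_withDensity_eq_integral_smul hmeas]
    congr 1; funext x
    rw [NNReal.smul_def, Real.coe_toNNReal _ (gaussianPDFReal_nonneg 0 1 x), smul_eq_mul]
  -- pointwise facts about the pdf
  have hpdf_le : ∀ x : ℝ, gaussianPDFReal 0 1 x ≤ 1 / 2 := by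
    intro x
    rw [gaussianPDFReal]
    have h1 : Real.exp (-(x - 0) ^ 2 / (2 * (1:ℝ≥0))) ≤ 1 := by
      rw [Real.exp_le_one_iff]
      push_cast
      nlinarith [sq_nonneg (x - 0)]
    have h2 : (Real.sqrt (2 * Real.pi * (1:ℝ≥0)))⁻¹ ≤ 1 / 2 := by
      push_cast
      rw [mul_one]
      rw [inv_le_comm₀ (by positivity) (by norm_num)]
      simpa using sqrt_two_pi_ge_two
    calc (Real.sqrt (2 * Real.pi * (1:ℝ≥0)))⁻¹ * Real.exp (-(x - 0) ^ 2 / (2 * (1:ℝ≥0)))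
        ≤ (Real.sqrt (2 * Real.pi * (1:ℝ≥0)))⁻¹ * 1 := by
          exact mul_le_mul_of_nonneg_left h1 (by positivity)
      _ ≤ 1 / 2 := by rwa [mul_one]
  have hpdf_nonneg := gaussianPDFReal_nonneg 0 1
  constructor
  · -- upper bound
    intro a ha
    rw [key a]
    have hmono : ∫ x, gaussianPDFReal 0 1 x *
        (x ^ 2 * (Real.exp (a * x) / (1 + Real.exp (a * x)) ^ 2))
        ≤ ∫ x, (1/2 : ℝ) * (x ^ 2 * Real.exp (-(a * |x|))) := by
      refine integral_mono_of_nonneg (Filter.Eventually.of_forall fun x => mul_nonneg (hpdf_nonneg x) (by positivity))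
        ((majorant_integrable ha).const_mul _) (Filter.Eventually.of_forall fun x => ?_)
      have hσ : Real.exp (a * x) / (1 + Real.exp (a * x)) ^ 2 ≤ Real.exp (-(a * |x|)) := by
        have := sigma_le_exp_neg_abs (a * x)
        rwa [abs_mul, abs_of_pos ha] at this
      refine mul_le_mul (hpdf_le x) ?_ (by positivity) (by norm_num)
      exact mul_le_mul_of_nonneg_left hσ (sq_nonneg x)
    rw [integral_const_mul, majorant_integral ha] at hmono
    have h3 : (0:ℝ) < a ^ 3 := by positivity
    calc _ ≤ (1/2 : ℝ) * (4 / a ^ 3) := hmono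
      _ = 2 / a ^ 3 := by ring
      _ ≤ 4 / a ^ 3 := by rw [div_le_div_iff₀ h3 h3]; nlinarith
  · -- lower bound
    refine ⟨(Real.sqrt (2 * Real.pi))⁻¹ * Real.exp (-3) / 4, by positivity, fun a ha2 => ?_⟩
    set c : ℝ := (Real.sqrt (2 * Real.pi))⁻¹ * Real.exp (-3) / 4 with hc
    have ha : 0 < a := lt_of_lt_of_le (Real.sqrt_pos.mpr (by norm_num)) ha2
    rw [key a]
    set h : ℝ → ℝ := fun x => gaussianPDFReal 0 1 x *
        (x ^ 2 * (Real.exp (a * x) / (1 + Real.exp (a * x)) ^ 2)) with hh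
    have hmeas : AEStronglyMeasurable h volume := by
      refine Measurable.aestronglyMeasurable ?_
      exact (measurable_gaussianPDFReal 0 1).mul (by fun_prop)
    have hIntegrable : Integrable h := by
      refine (majorant_integrable ha).mono hmeas (Filter.Eventually.of_forall fun x => ?_)
      have hσ : Real.exp (a * x) / (1 + Real.exp (a * x)) ^ 2 ≤ Real.exp (-(a * |x|)) := by
        have := sigma_le_exp_neg_abs (a * x)
        rwa [abs_mul, abs_of_pos ha] at this
      have h1 : h x ≤ x ^ 2 * Real.exp (-(a * |x|)) := by
        simp only [hh]
        calc gaussianPDFReal 0 1 x * (x ^ 2 * (Real.exp (a * x) / (1 + Real.exp (a * x)) ^ 2))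
            ≤ 1 * (x ^ 2 * Real.exp (-(a * |x|))) := by
              refine mul_le_mul ((hpdf_le x).trans (by norm_num)) ?_ (by positivity) (by norm_num)
              exact mul_le_mul_of_nonneg_left hσ (sq_nonneg x)
          _ = x ^ 2 * Real.exp (-(a * |x|)) := one_mul _
      rw [Real.norm_eq_abs, Real.norm_eq_abs,
        abs_of_nonneg (mul_nonneg (hpdf_nonneg x) (by positivity) : (0:ℝ) ≤ h x),
        abs_of_nonneg (by positivity)]
      exact h1
    have hset : ∫ x in Icc (1/a) (2/a), h x ≤ ∫ x, h x :=
      setIntegral_le_integral hIntegrable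
        (Filter.Eventually.of_forall fun x => mul_nonneg (hpdf_nonneg x) (by positivity))
    have hlow : ∀ x ∈ Icc (1/a) (2/a), c / a ^ 2 ≤ h x := by
      intro x hx
      obtain ⟨hx1, hx2⟩ := hx
      have hxpos : 0 < x := lt_of_lt_of_le (by positivity) hx1
      have hx2' : x ≤ Real.sqrt 2 := by
        calc x ≤ 2 / a := hx2
          _ ≤ Real.sqrt 2 := by
            rw [div_le_iff₀ ha]
            have hs2 : Real.sqrt 2 * Real.sqrt 2 = 2 := Real.mul_self_sqrt (by norm_num)
            calc (2:ℝ) = Real.sqrt 2 * Real.sqrt 2 := hs2.symm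
              _ ≤ Real.sqrt 2 * a := mul_le_mul_of_nonneg_left ha2 (Real.sqrt_nonneg 2)
      have hxsq : x ^ 2 ≤ 2 := by
        calc x ^ 2 ≤ Real.sqrt 2 ^ 2 := by nlinarith
          _ = 2 := Real.sq_sqrt (by norm_num)
      -- pdf lower bound
      have hA : (Real.sqrt (2 * Real.pi))⁻¹ * Real.exp (-1) ≤ gaussianPDFReal 0 1 x := by
        rw [gaussianPDFReal]
        push_cast
        rw [mul_one, mul_one, sub_zero]
        refine mul_le_mul_of_nonneg_left ?_ (by positivity)
        exact Real.exp_le_exp.mpr (by nlinarith)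
      -- x² lower bound
      have hB : (1/a) ^ 2 ≤ x ^ 2 := by nlinarith [one_div_pos.mpr ha]
      -- sigmoid lower bound
      have haxle : a * x ≤ 2 := by
        have := (le_div_iff₀ ha).mp hx2
        nlinarith
      have hax0 : 0 ≤ a * x := by positivity
      have hS : Real.exp (-2) / 4 ≤ Real.exp (a * x) / (1 + Real.exp (a * x)) ^ 2 := by
        rw [div_le_div_iff₀ (by norm_num) (by positivity)]
        have e1 : Real.exp (-2) * Real.exp (a * x) ≤ 1 := by
          rw [← Real.exp_add]
          exact Real.exp_le_one_iff.mpr (by linarith)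
        have e2 : 1 ≤ Real.exp (a * x) := Real.one_le_exp hax0
        nlinarith [Real.exp_pos (-2), Real.exp_pos (a * x), sq_nonneg (Real.exp (a * x) - 1)]
      have hcomb : ((Real.sqrt (2 * Real.pi))⁻¹ * Real.exp (-1)) *
          ((1/a) ^ 2 * (Real.exp (-2) / 4)) ≤ h x := by
        simp only [hh]
        refine mul_le_mul hA ?_ (by positivity) (hpdf_nonneg x)
        exact mul_le_mul hB hS (by positivity) (sq_nonneg x)
      refine le_trans (le_of_eq ?_) hcomb
      have he : Real.exp (-1) * Real.exp (-2) = Real.exp (-3) := by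
        rw [← Real.exp_add]; norm_num
      rw [hc, ← he]
      field_simp
    have hvol : (volume (Icc (1/a) (2/a))).toReal = 1 / a := by
      have hd : 2/a - 1/a = 1/a := by ring
      rw [Real.volume_Icc, hd, ENNReal.toReal_ofReal (by positivity)]
    have hge := setIntegral_ge_of_const_le_real measurableSet_Icc
        (by rw [Real.volume_Icc]; exact ENNReal.ofReal_ne_top) hlow hIntegrable.integrableOn
    rw [measureReal_def, hvol] at hge
    calc c / a ^ 3 = c / a ^ 2 * (1 / a) := by ring
      _ ≤ ∫ x in Icc (1/a) (2/a), h x := hge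
      _ ≤ ∫ x, h x := hset
end
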